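/- arXiv:1910.14252 — 2 statements merged into one kernel-verified Lean document; each statement's English description precedes it below -/
import Mathlib

section
/- Let ℓ be prime, let n have base-ℓ expansion with digits b_0, …, b_r, and consider partitions λ = (λ_1, …, λ_k) of n satisfying ν_ℓ(n!) = Σ_i ν_ℓ(λ_i!). Among all such partitions, the product Π_i λ_i! is minimized by the partition consisting of b_j copies of ℓ^j for each j = 0, …, r. -/
namespace MinFactProdAux

/-- Product of `(ℓ^(k+i))! ^ dᵢ` over a digit list. -/
def Pf (ℓ : ℕ) : ℕ → List ℕ → ℕ
  | _, [] => 1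
  | k, d :: t => (Nat.factorial (ℓ ^ k)) ^ d * Pf ℓ (k + 1) t

/-- `Q ℓ k n` is `Pf` applied to the base-ℓ digits of `n`. -/
def Q (ℓ k n : ℕ) : ℕ := Pf ℓ k (Nat.digits ℓ n)

/-- base-ℓ digit sum. -/
def sd (ℓ n : ℕ) : ℕ := (Nat.digits ℓ n).sum

lemma sd_zero (ℓ : ℕ) : sd ℓ 0 = 0 := by simp [sd]

lemma Q_ml {ℓ : ℕ} (hℓ : 1 < ℓ) (k q c : ℕ) (hc : c < ℓ) :
    Q ℓ k (ℓ * q + c) = (Nat.factorial (ℓ ^ k)) ^ c * Q ℓ (k + 1) q := by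
  rcases Nat.eq_zero_or_pos (ℓ * q + c) with h0 | hpos
  · have hc0 : c = 0 := by omega
    have hq0 : q = 0 := by
      rcases Nat.mul_eq_zero.mp (show ℓ * q = 0 by omega) with h | h
      · omega
      · exact h
    subst hc0; subst hq0
    simp [Q, Pf]
  · have h1 : (ℓ * q + c) % ℓ = c := by
      rw [Nat.mul_add_mod]; exact Nat.mod_eq_of_lt hc
    have h2 : (ℓ * q + c) / ℓ = q := by
      rw [Nat.mul_add_div (by omega), Nat.div_eq_of_lt hc, Nat.add_zero]
    rw [Q, Nat.digits_def' hℓ hpos, h1, h2]; rfl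

lemma sd_ml {ℓ : ℕ} (hℓ : 1 < ℓ) (q c : ℕ) (hc : c < ℓ) :
    sd ℓ (ℓ * q + c) = c + sd ℓ q := by
  rcases Nat.eq_zero_or_pos (ℓ * q + c) with h0 | hpos
  · have hc0 : c = 0 := by omega
    have hq0 : q = 0 := by
      rcases Nat.mul_eq_zero.mp (show ℓ * q = 0 by omega) with h | h
      · omega
      · exact h
    subst hc0; subst hq0
    simp [sd]
  · have h1 : (ℓ * q + c) % ℓ = c := by
      rw [Nat.mul_add_mod]; exact Nat.mod_eq_of_lt hc
    have h2 : (ℓ * q + c) / ℓ = q := by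
      rw [Nat.mul_add_div (by omega), Nat.div_eq_of_lt hc, Nat.add_zero]
    rw [sd, Nat.digits_def' hℓ hpos, h1, h2]; rfl

lemma sd_one {ℓ : ℕ} (hℓ : 1 < ℓ) : sd ℓ 1 = 1 := by
  have := sd_ml hℓ 0 1 hℓ
  simpa [sd_zero] using this

/-- Subadditivity of the digit sum. -/
lemma sd_add_le {ℓ : ℕ} (hℓ : 1 < ℓ) : ∀ N a b : ℕ, a + b ≤ N →
    sd ℓ (a + b) ≤ sd ℓ a + sd ℓ b := by
  intro N
  induction N with
  | zero =>
    intro a b h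
    obtain ⟨rfl, rfl⟩ : a = 0 ∧ b = 0 := by omega
    simp [sd_zero]
  | succ N IH =>
    intro a b h
    rcases Nat.eq_zero_or_pos (a + b) with h0 | hpos
    · obtain ⟨rfl, rfl⟩ : a = 0 ∧ b = 0 := by omega
      simp [sd_zero]
    obtain ⟨r, hr, hra⟩ : ∃ r, r < ℓ ∧ ℓ * (a / ℓ) + r = a :=
      ⟨a % ℓ, Nat.mod_lt _ (by omega), by rw [Nat.add_comm, Nat.mod_add_div]⟩
    obtain ⟨t, ht, htb⟩ : ∃ t, t < ℓ ∧ ℓ * (b / ℓ) + t = b :=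
      ⟨b % ℓ, Nat.mod_lt _ (by omega), by rw [Nat.add_comm, Nat.mod_add_div]⟩
    set a₂ := a / ℓ with ha2
    set b₂ := b / ℓ with hb2
    have hsda : sd ℓ a = r + sd ℓ a₂ := by rw [← hra]; exact sd_ml hℓ _ _ hr
    have hsdb : sd ℓ b = t + sd ℓ b₂ := by rw [← htb]; exact sd_ml hℓ _ _ ht
    rcases lt_or_ge (r + t) ℓ with hcase | hcase
    · have heq : a + b = ℓ * (a₂ + b₂) + (r + t) := by rw [← hra, ← htb]; ring
      have hmul : 2 * (a₂ + b₂) ≤ ℓ * (a₂ + b₂) := Nat.mul_le_mul (by omega) le_rfl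
      rw [heq, sd_ml hℓ _ _ hcase]
      have := IH a₂ b₂ (by omega)
      omega
    · have heq : a + b = ℓ * (a₂ + b₂ + 1) + (r + t - ℓ) := by
        rw [← hra, ← htb, Nat.mul_add ℓ (a₂ + b₂) 1, Nat.mul_add ℓ a₂ b₂, Nat.mul_one]
        omega
      have hmul : 2 * (a₂ + b₂ + 1) ≤ ℓ * (a₂ + b₂ + 1) := Nat.mul_le_mul (by omega) le_rfl
      rw [heq, sd_ml hℓ _ _ (by omega)]
      have h1 := IH (a₂ + b₂) 1 (by omega)
      have h2 := IH a₂ b₂ (by omega)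
      rw [sd_one hℓ] at h1
      omega

lemma sd_add_le' {ℓ : ℕ} (hℓ : 1 < ℓ) (a b : ℕ) : sd ℓ (a + b) ≤ sd ℓ a + sd ℓ b :=
  sd_add_le hℓ (a + b) a b le_rfl

lemma sd_sum_le {ℓ : ℕ} (hℓ : 1 < ℓ) : ∀ L : List ℕ, sd ℓ L.sum ≤ (L.map (sd ℓ)).sum := by
  intro L
  induction L with
  | nil => simp [sd_zero]
  | cons a T IH =>
    simp only [List.sum_cons, List.map_cons]
    calc sd ℓ (a + T.sum) ≤ sd ℓ a + sd ℓ T.sum := sd_add_le' hℓ a T.sum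
      _ ≤ sd ℓ a + (T.map (sd ℓ)).sum := by omega

/-- For any positive `m` there is a power of `ℓ` whose removal lowers the digit sum by one. -/
lemma exists_pow {ℓ : ℕ} (hℓ : 1 < ℓ) : ∀ m : ℕ, 0 < m →
    ∃ j, ℓ ^ j ≤ m ∧ sd ℓ (m - ℓ ^ j) + 1 = sd ℓ m := by
  intro m
  induction m using Nat.strong_induction_on with
  | _ m IH =>
    intro hm
    obtain ⟨d, hd, hdm⟩ : ∃ d, d < ℓ ∧ ℓ * (m / ℓ) + d = m :=
      ⟨m % ℓ, Nat.mod_lt _ (by omega), by rw [Nat.add_comm, Nat.mod_add_div]⟩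
    set u := m / ℓ with hu
    rcases Nat.eq_zero_or_pos d with hd0 | hdpos
    · -- lowest digit 0; recurse on u
      have hupos : 0 < u := by
        rcases Nat.eq_zero_or_pos u with h0 | h
        · rw [h0, Nat.mul_zero] at hdm; omega
        · exact h
      have hult : u < m := Nat.div_lt_self hm hℓ
      obtain ⟨j, hj1, hj2⟩ := IH u hult hupos
      refine ⟨j + 1, ?_, ?_⟩
      · have h1 : ℓ ^ (j + 1) = ℓ * ℓ ^ j := by ring
        rw [h1]
        calc ℓ * ℓ ^ j ≤ ℓ * u := Nat.mul_le_mul_left ℓ hj1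
          _ ≤ m := by omega
      · have hsub : m - ℓ ^ (j + 1) = ℓ * (u - ℓ ^ j) + 0 := by
          rw [Nat.add_zero, Nat.mul_sub, pow_succ, mul_comm (ℓ ^ j) ℓ]
          omega
        have hm' : m = ℓ * u + 0 := by omega
        rw [hsub, sd_ml hℓ _ _ (by omega)]
        rw [hm', sd_ml hℓ _ _ (by omega)]
        omega
    · refine ⟨0, by rw [pow_zero]; exact hm, ?_⟩
      have hsub : m - ℓ ^ 0 = ℓ * u + (d - 1) := by rw [pow_zero]; omega
      rw [hsub, sd_ml hℓ _ _ (by omega), ← hdm, sd_ml hℓ _ _ hd]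
      omega

/-- Key recursion: removing `ℓ^j` from `m` while decreasing the digit sum by exactly one
divides out exactly one factor `(ℓ^(k+j))!` from `Q`. -/
lemma Q_sub {ℓ : ℕ} (hℓ : 1 < ℓ) : ∀ j m k : ℕ, ℓ ^ j ≤ m →
    sd ℓ (m - ℓ ^ j) + 1 = sd ℓ m →
    Q ℓ k m = Nat.factorial (ℓ ^ (k + j)) * Q ℓ k (m - ℓ ^ j) := by
  intro j
  induction j with
  | zero =>
    intro m k hjm hsd
    simp only [pow_zero] at hjm hsd ⊢
    obtain ⟨d, hd, hdm⟩ : ∃ d, d < ℓ ∧ ℓ * (m / ℓ) + d = m :=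
      ⟨m % ℓ, Nat.mod_lt _ (by omega), by rw [Nat.add_comm, Nat.mod_add_div]⟩
    set u := m / ℓ with hu
    rcases Nat.eq_zero_or_pos d with hd0 | hdpos
    · -- lowest digit 0: contradiction with digit sum hypothesis
      exfalso
      have hupos : 0 < u := by
        rcases Nat.eq_zero_or_pos u with h0 | h
        · rw [h0, Nat.mul_zero] at hdm; omega
        · exact h
      obtain ⟨v, hv⟩ : ∃ v, u = v + 1 := ⟨u - 1, by omega⟩
      have hsub : m - 1 = ℓ * v + (ℓ - 1) := by
        rw [← hdm, hd0, Nat.add_zero, hv, Nat.mul_add, Nat.mul_one]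
        omega
      have hsd1 : sd ℓ (m - 1) = (ℓ - 1) + sd ℓ v := by
        rw [hsub]; exact sd_ml hℓ _ _ (by omega)
      have hsdm : sd ℓ m = 0 + sd ℓ u := by
        rw [← hdm, hd0]; exact sd_ml hℓ _ _ (by omega)
      have hsu : sd ℓ u ≤ sd ℓ v + 1 := by
        have h1 := sd_add_le' hℓ v 1
        rw [sd_one hℓ] at h1
        rw [hv]
        omega
      omega
    · -- lowest digit positive
      have hsub : m - 1 = ℓ * u + (d - 1) := by omega
      have hQ1 : Q ℓ k m = (Nat.factorial (ℓ ^ k)) ^ d * Q ℓ (k + 1) u := by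
        rw [← hdm]; exact Q_ml hℓ _ _ _ hd
      have hQ2 : Q ℓ k (m - 1) = (Nat.factorial (ℓ ^ k)) ^ (d - 1) * Q ℓ (k + 1) u := by
        rw [hsub]; exact Q_ml hℓ _ _ _ (by omega)
      rw [hQ1, hQ2, Nat.add_zero]
      obtain ⟨e, he⟩ : ∃ e, d = e + 1 := ⟨d - 1, by omega⟩
      subst he
      rw [Nat.add_sub_cancel, pow_succ]
      ring
  | succ j IHj =>
    intro m k hjm hsd
    obtain ⟨d, hd, hdm⟩ : ∃ d, d < ℓ ∧ ℓ * (m / ℓ) + d = m :=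
      ⟨m % ℓ, Nat.mod_lt _ (by omega), by rw [Nat.add_comm, Nat.mod_add_div]⟩
    set u := m / ℓ with hu
    have hju : ℓ ^ j ≤ u := by
      by_contra hcon
      push_neg at hcon
      have h1 : ℓ ^ (j + 1) = ℓ * ℓ ^ j := by ring
      have h2 : ℓ * ℓ ^ j ≤ m := by rw [← h1]; exact hjm
      have h5 : ℓ * (u + 1) ≤ ℓ * ℓ ^ j := Nat.mul_le_mul le_rfl (by omega)
      have h6 : ℓ * (u + 1) = ℓ * u + ℓ := by ring
      omega
    have hsub : m - ℓ ^ (j + 1) = ℓ * (u - ℓ ^ j) + d := by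
      rw [Nat.mul_sub]
      have h5 : ℓ ^ (j + 1) = ℓ * ℓ ^ j := by ring
      have h6 : ℓ * ℓ ^ j ≤ ℓ * u := Nat.mul_le_mul_left ℓ hju
      omega
    have hsd1 : sd ℓ (m - ℓ ^ (j + 1)) = d + sd ℓ (u - ℓ ^ j) := by
      rw [hsub]; exact sd_ml hℓ _ _ hd
    have hsdm : sd ℓ m = d + sd ℓ u := by rw [← hdm]; exact sd_ml hℓ _ _ hd
    have hIH : Q ℓ (k + 1) u = Nat.factorial (ℓ ^ (k + 1 + j)) * Q ℓ (k + 1) (u - ℓ ^ j) :=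
      IHj u (k + 1) hju (by omega)
    have hQ1 : Q ℓ k m = (Nat.factorial (ℓ ^ k)) ^ d * Q ℓ (k + 1) u := by
      rw [← hdm]; exact Q_ml hℓ _ _ _ hd
    have hQ2 : Q ℓ k (m - ℓ ^ (j + 1)) =
        (Nat.factorial (ℓ ^ k)) ^ d * Q ℓ (k + 1) (u - ℓ ^ j) := by
      rw [hsub]; exact Q_ml hℓ _ _ _ hd
    rw [hQ1, hQ2, hIH, show k + (j + 1) = k + 1 + j by ring]
    ring

lemma sd_pow {ℓ : ℕ} (hℓ : 1 < ℓ) (j : ℕ) : sd ℓ (ℓ ^ j) = 1 := by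
  induction j with
  | zero => simpa using sd_one hℓ
  | succ j IH =>
    have h1 : ℓ ^ (j + 1) = ℓ * ℓ ^ j + 0 := by ring
    rw [h1, sd_ml hℓ _ _ (by omega)]
    omega

/-- Legendre's theorem in additive form. -/
lemma legendre_eq {ℓ : ℕ} (hℓ : ℓ.Prime) (m : ℕ) :
    (ℓ - 1) * padicValNat ℓ (Nat.factorial m) + sd ℓ m = m := by
  haveI := Fact.mk hℓ
  have h1 := sub_one_mul_padicValNat_factorial (p := ℓ) m
  have h2 := Nat.digit_sum_le ℓ m
  have h3 : sd ℓ m = (Nat.digits ℓ m).sum := rfl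
  omega

lemma sum_conv {ℓ : ℕ} (hℓ : ℓ.Prime) : ∀ L : List ℕ,
    (ℓ - 1) * (L.map (fun x => padicValNat ℓ (Nat.factorial x))).sum
      + (L.map (sd ℓ)).sum = L.sum := by
  intro L
  induction L with
  | nil => simp
  | cons a T IH =>
    simp only [List.map_cons, List.sum_cons] at IH ⊢
    have h := legendre_eq hℓ a
    rw [Nat.mul_add]
    omega

/-- Main inequality, by strong induction on `n`. -/
lemma main_le {ℓ : ℕ} (hℓ : 1 < ℓ) : ∀ n : ℕ, ∀ L : List ℕ, L.sum = n →
    (L.map (sd ℓ)).sum = sd ℓ n → Q ℓ 0 n ≤ (L.map Nat.factorial).prod := by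
  intro n
  induction n using Nat.strong_induction_on with
  | _ n IH =>
    intro L
    induction L with
    | nil =>
      intro hsum hsd
      simp only [List.sum_nil] at hsum
      subst hsum
      simp [Q, Pf]
    | cons a T IHL =>
      intro hsum hsd
      simp only [List.map_cons, List.sum_cons, List.prod_cons] at hsum hsd ⊢
      rcases Nat.eq_zero_or_pos a with rfl | ha
      · rw [sd_zero] at hsd
        simpa using IHL (by omega) (by omega)
      · obtain ⟨j, hja, hsa⟩ := exists_pow hℓ a ha
        set x := ℓ ^ j with hx
        have hxpos : 0 < x := pow_pos (by omega) j
        have han : a ≤ n := by omega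
        have hxn : x ≤ n := le_trans hja han
        set a' := a - x with ha'
        set n' := n - x with hn'
        have hsum' : a' + T.sum = n' := by omega
        have h1 : sd ℓ n' ≤ sd ℓ a' + (T.map (sd ℓ)).sum := by
          calc sd ℓ n' = sd ℓ (a' + T.sum) := by rw [hsum']
            _ ≤ sd ℓ a' + sd ℓ T.sum := sd_add_le' hℓ _ _
            _ ≤ sd ℓ a' + (T.map (sd ℓ)).sum := by
                have := sd_sum_le hℓ T; omega
        have h2 : sd ℓ n ≤ sd ℓ n' + 1 := by
          have hnn : n = n' + x := by omega
          calc sd ℓ n = sd ℓ (n' + x) := by rw [← hnn]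
            _ ≤ sd ℓ n' + sd ℓ x := sd_add_le' hℓ _ _
            _ = sd ℓ n' + 1 := by rw [hx, sd_pow hℓ]
        have hsd' : sd ℓ a' + (T.map (sd ℓ)).sum = sd ℓ n' := by omega
        have hsdn : sd ℓ n' + 1 = sd ℓ n := by omega
        have hn'lt : n' < n := by omega
        have hIH : Q ℓ 0 n' ≤ Nat.factorial a' * (T.map Nat.factorial).prod := by
          have h := IH n' hn'lt (a' :: T)
            (by simpa using hsum')
            (by simp only [List.map_cons, List.sum_cons]; omega)
          simpa using h
        have hQ : Q ℓ 0 n = Nat.factorial x * Q ℓ 0 n' := by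
          have h := Q_sub hℓ j n 0 (by omega)
            (by rw [← hx, ← hn']; exact hsdn)
          rw [Nat.zero_add, ← hx, ← hn'] at h
          exact h
        have hbin : Nat.factorial x * Nat.factorial a' ≤ Nat.factorial a := by
          have hd := Nat.factorial_mul_factorial_dvd_factorial_add x a'
          rw [show x + a' = a by omega] at hd
          exact Nat.le_of_dvd (Nat.factorial_pos a) hd
        calc Q ℓ 0 n = Nat.factorial x * Q ℓ 0 n' := hQ
          _ ≤ Nat.factorial x * (Nat.factorial a' * (T.map Nat.factorial).prod) :=
              Nat.mul_le_mul_left _ hIH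
          _ = (Nat.factorial x * Nat.factorial a') * (T.map Nat.factorial).prod := by ring
          _ ≤ Nat.factorial a * (T.map Nat.factorial).prod :=
              Nat.mul_le_mul_right _ hbin

lemma prod_eq_Pf (ℓ : ℕ) : ∀ (ds : List ℕ) (k : ℕ),
    (∏ j ∈ Finset.range ds.length, (Nat.factorial (ℓ ^ (k + j))) ^ ds.getD j 0)
      = Pf ℓ k ds := by
  intro ds
  induction ds with
  | nil => intro k; simp [Pf]
  | cons d t IHd =>
    intro k
    rw [List.length_cons, Finset.prod_range_succ']
    have h1 : ∀ j, (d :: t).getD (j + 1) 0 = t.getD j 0 := fun j => rfl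
    have h2 : (d :: t).getD 0 0 = d := rfl
    simp only [h1, h2, Nat.add_zero]
    rw [show (∏ j ∈ Finset.range t.length, (Nat.factorial (ℓ ^ (k + (j + 1)))) ^ t.getD j 0)
        = ∏ j ∈ Finset.range t.length, (Nat.factorial (ℓ ^ (k + 1 + j))) ^ t.getD j 0 by
      apply Finset.prod_congr rfl
      intro j _
      congr 2
      ring]
    rw [IHd (k + 1)]
    simp only [Pf]
    ring

end MinFactProdAux

/-- Among partitions λ of n with ν_ℓ(n!) = Σ ν_ℓ(λ_i!), the product ∏ λ_i! is
minimized by the partition with b_j copies of ℓ^j, where the b_j are the base-ℓ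
digits of n. -/
theorem min_factorial_product_partition (ℓ n : ℕ) (hℓ : ℓ.Prime) (L : List ℕ)
    (hpos : ∀ x ∈ L, 0 < x) (hsum : L.sum = n)
    (hval : (L.map (fun x => padicValNat ℓ (Nat.factorial x))).sum
      = padicValNat ℓ (Nat.factorial n)) :
    ∏ j ∈ Finset.range (Nat.digits ℓ n).length,
        (Nat.factorial (ℓ ^ j)) ^ (Nat.digits ℓ n).getD j 0
      ≤ (L.map Nat.factorial).prod := by
  have hℓ1 : 1 < ℓ := hℓ.one_lt
  have hconv : (L.map (MinFactProdAux.sd ℓ)).sum = MinFactProdAux.sd ℓ n := by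
    have h1 := MinFactProdAux.sum_conv hℓ L
    have h2 := MinFactProdAux.legendre_eq hℓ n
    rw [hval, hsum] at h1
    omega
  have hmain := MinFactProdAux.main_le hℓ1 n L hsum hconv
  have heq : (∏ j ∈ Finset.range (Nat.digits ℓ n).length,
      (Nat.factorial (ℓ ^ j)) ^ (Nat.digits ℓ n).getD j 0) = MinFactProdAux.Q ℓ 0 n := by
    rw [MinFactProdAux.Q, ← MinFactProdAux.prod_eq_Pf ℓ (Nat.digits ℓ n) 0]
    apply Finset.prod_congr rfl
    intro j _
    rw [Nat.zero_add]
  rw [heq]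
  exact hmain
end

section
/- Let ℓ be prime, d ≥ 1, and let (n_1, …, n_d) be a partition of n with n > 1. Suppose for positive integers m, p (p ∣ m, ℓ ∣ p) that n·ν_ℓ(m) − d·ν_ℓ(p) + Σ_{i=1}^{d} ν_ℓ(n_i!) = n·ν_ℓ(m) − ν_ℓ(p) + ν_ℓ(n!). Then d = 1 and the partition is trivial. -/
lemma pv_le_of_dvd {p a b : ℕ} [Fact p.Prime] (ha : a ≠ 0) (hb : b ≠ 0) (h : a ∣ b) :
    padicValNat p a ≤ padicValNat p b := by
  obtain ⟨k, rfl⟩ := h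
  have hk : k ≠ 0 := by rintro rfl; simp at hb
  rw [padicValNat.mul ha hk]; omega

lemma list_sum_pv_le (ℓ : ℕ) [Fact ℓ.Prime] (L : List ℕ) :
    (L.map (fun x => padicValNat ℓ (Nat.factorial x))).sum ≤ padicValNat ℓ (Nat.factorial L.sum) := by
  induction L with
  | nil => simp
  | cons a L ih =>
    simp only [List.map_cons, List.sum_cons, List.sum_cons]
    have hdvd : Nat.factorial a * Nat.factorial L.sum ∣ Nat.factorial (a + L.sum) :=
      Nat.factorial_mul_factorial_dvd_factorial_add a L.sum
    have := pv_le_of_dvd (p := ℓ)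
      (Nat.mul_ne_zero (Nat.factorial_ne_zero a) (Nat.factorial_ne_zero L.sum))
      (Nat.factorial_ne_zero _) hdvd
    rw [padicValNat.mul (Nat.factorial_ne_zero a) (Nat.factorial_ne_zero L.sum)] at this
    omega

lemma cast_sum (ℓ : ℕ) (L : List ℕ) :
    (L.map (fun x => (padicValNat ℓ (Nat.factorial x) : ℤ))).sum
      = ((L.map (fun x => padicValNat ℓ (Nat.factorial x))).sum : ℤ) := by
  induction L with
  | nil => simp
  | cons a L ih => simp [ih]

/-- If ℓ ∣ p and the partition (n₁,…,n_d) of n satisfies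
n·ν_ℓ(m) − d·ν_ℓ(p) + Σ ν_ℓ(nᵢ!) = n·ν_ℓ(m) − ν_ℓ(p) + ν_ℓ(n!), then d = 1 and the
partition is the trivial partition (n). -/
theorem partition_trivial_of_valuation_eq (ℓ n d m p : ℕ) (hℓ : ℓ.Prime) (hn : 1 < n)
    (hd : 1 ≤ d) (L : List ℕ) (hlen : L.length = d) (hpos : ∀ x ∈ L, 0 < x)
    (hsum : L.sum = n) (hm : 0 < m) (hp : 0 < p) (hpm : p ∣ m) (hlp : ℓ ∣ p)
    (heq : (n : ℤ) * padicValNat ℓ m - (d : ℤ) * padicValNat ℓ p +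
        (L.map (fun x => (padicValNat ℓ (Nat.factorial x) : ℤ))).sum
      = (n : ℤ) * padicValNat ℓ m - padicValNat ℓ p + padicValNat ℓ (Nat.factorial n)) :
    d = 1 ∧ L = [n] := by
  haveI : Fact ℓ.Prime := ⟨hℓ⟩
  have ha : 1 ≤ padicValNat ℓ p := one_le_padicValNat_of_dvd hp.ne' hlp
  have hS : (L.map (fun x => (padicValNat ℓ (Nat.factorial x) : ℤ))).sum
      = ((L.map (fun x => padicValNat ℓ (Nat.factorial x))).sum : ℤ) := cast_sum ℓ L
  have hle : (L.map (fun x => padicValNat ℓ (Nat.factorial x))).sum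
      ≤ padicValNat ℓ (Nat.factorial n) := hsum ▸ list_sum_pv_le ℓ L
  rw [hS] at heq
  set S := (L.map (fun x => padicValNat ℓ (Nat.factorial x))).sum
  set a := padicValNat ℓ p
  set F := padicValNat ℓ (Nat.factorial n)
  have key : ((d : ℤ) - 1) * a = (S : ℤ) - F := by push_cast at heq ⊢; linarith
  have hd1 : d = 1 := by
    by_contra h
    have h2 : 2 ≤ d := by omega
    nlinarith [key, (by exact_mod_cast hle : (S : ℤ) ≤ F), (by exact_mod_cast ha : (1:ℤ) ≤ a),
      (by exact_mod_cast h2 : (2:ℤ) ≤ d)]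
  refine ⟨hd1, ?_⟩
  subst hd1
  match L, hlen with
  | [x], _ => simp at hsum; simp [hsum]
end
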